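/- If σ is an acyclic circuit signature of a directed graph D and e is a non-loop edge of D, then the contracted signature σ/e is an acyclic circuit signature of D/e. -/

import Mathlib

/-!
For a non-loop edge `e`, restricting to `E - e` is a bijection between the circulations of `D`
and those of `D/e`: the value on `e` is forced by conservation at the head of `e`. Supports
correspond, so every signed cycle of `D/e` is the restriction of exactly one signed cycle of `D`,
provided the forced value on `e` is `0` or `±1`. That holds because contracting the other edges
of the cycle one at a time eventually makes `e` parallel to one of them, and a pair of parallel
edges carries a `±1` circulation. Hence `σ/e` picks exactly one orientation of each cycle of `D/e`.
A vanishing nonnegative combination of cycles of `σ/e` lifts to a combination of their preimages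
in `σ`, a circulation of `D` vanishing off `e`, which must be zero; acyclicity of `σ` excludes this.
-/

open Finset Pointwise

noncomputable section

variable {V E ι : Type*}

/-- The vector `x_f ∈ ℝ^V` of an edge `f` with tail `t f` and head `h f`:
`+1` at the head, `-1` at the tail, `0` elsewhere (so `0` for a loop). -/
def xvec [DecidableEq V] (t h : E → V) (f : E) : V → ℝ :=
  fun v => (if v = h f then 1 else 0) - (if v = t f then 1 else 0)

/-- The extended root polytope of the subgraph with edge set `S`:
`conv({0} ∪ {x_f : f ∈ S})`. -/
def rootPolyOn [DecidableEq V] (t h : E → V) (S : Set E) : Set (V → ℝ) :=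
  convexHull ℝ ({0} ∪ (xvec t h '' S))

/-- The underlying (simple) undirected graph of the edges in `S`. -/
def underlyingOn (t h : E → V) (S : Set E) : SimpleGraph V :=
  SimpleGraph.fromRel (fun u v => ∃ f ∈ S, t f = u ∧ h f = v)

/-- A spanning tree: a set of edges whose underlying graph is connected and which
has `|V| - 1` edges. -/
def IsSpanningTree [Fintype V] (t h : E → V) (T : Finset E) : Prop :=
  (underlyingOn t h ↑T).Connected ∧ T.card + 1 = Fintype.card V

/-- The number of lattice points of the `k`-th dilate of `Q`. -/
def latCount [Fintype ι] (Q : Set (ι → ℝ)) (k : ℕ) : ℕ :=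
  Nat.card {p : ι → ℤ // (fun i => (p i : ℝ)) ∈ (k : ℝ) • Q}

/-- The Ehrhart series of `Q` as a formal power series. -/
def ehrSeries [Fintype ι] (Q : Set (ι → ℝ)) : PowerSeries ℤ :=
  PowerSeries.mk fun k => (latCount Q k : ℤ)

/-- The dimension of a polytope: the rank of its vector span. -/
def pdim (Q : Set (ι → ℝ)) : ℕ := Module.finrank ℝ ↥(vectorSpan ℝ Q)

/-- `p` is the `h^*`-polynomial of `Q`: `(1-t)^{dim Q + 1} · Ehr_Q(t) = p(t)`. -/
def IsHStar [Fintype ι] (Q : Set (ι → ℝ)) (p : Polynomial ℤ) : Prop :=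
  (1 - PowerSeries.X) ^ (pdim Q + 1) * ehrSeries Q = PowerSeries.mk fun i => p.coeff i

/-- The `±1` vector of a signed cycle with positive arc `Cp` and negative arc `Cm`. -/
def chiVec [DecidableEq E] (Cp Cm : Finset E) : E → ℝ :=
  fun f => (if f ∈ Cp then 1 else 0) - (if f ∈ Cm then 1 else 0)

/-- A circulation: an assignment of reals to edges with zero net flow at each vertex. -/
def IsCirculation [Fintype E] [DecidableEq V] (t h : E → V) (φ : E → ℝ) : Prop :=
  ∑ f, φ f • xvec t h f = 0

/-- `(Cp, Cm)` is a signed cycle: the arcs are disjoint, the union is nonempty, the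
`±1` vector is a circulation, and the support `Cp ∪ Cm` is minimal among supports of
nonzero circulations (i.e. it is a circuit of the graphic oriented matroid). -/
def IsSignedCycle [Fintype E] [DecidableEq E] [DecidableEq V] (t h : E → V)
    (Cp Cm : Finset E) : Prop :=
  Disjoint Cp Cm ∧ (Cp ∪ Cm).Nonempty ∧ IsCirculation t h (chiVec Cp Cm) ∧
    ∀ φ : E → ℝ, IsCirculation t h φ → φ ≠ 0 →
      (∀ f, φ f ≠ 0 → f ∈ Cp ∪ Cm) → ∀ f ∈ Cp ∪ Cm, φ f ≠ 0

/-- A circuit signature: a choice, for each cycle, of exactly one of its two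
orientations. -/
def IsCircuitSignature [Fintype E] [DecidableEq E] [DecidableEq V] (t h : E → V)
    (σ : Set (Finset E × Finset E)) : Prop :=
  (∀ q ∈ σ, IsSignedCycle t h q.1 q.2) ∧
    ∀ Cp Cm : Finset E, IsSignedCycle t h Cp Cm → ((Cp, Cm) ∈ σ ↔ (Cm, Cp) ∉ σ)

/-- Acyclicity of a circuit signature: no nontrivial nonnegative combination of the
vectors of the chosen signed cycles vanishes. -/
def IsAcyclicSig [DecidableEq E] (σ : Set (Finset E × Finset E)) : Prop :=
  ∀ (s : Finset (Finset E × Finset E)) (a : Finset E × Finset E → ℝ),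
    ↑s ⊆ σ → (∀ q, 0 ≤ a q) → (∃ q ∈ s, a q ≠ 0) →
      ∑ q ∈ s, a q • chiVec q.1 q.2 ≠ 0

/-- A weight function is generic if the two arcs of every cycle have different
total weights. -/
def GenericWeight [Fintype E] [DecidableEq E] [DecidableEq V] (t h : E → V)
    (w : E → ℝ) : Prop :=
  ∀ Cp Cm : Finset E, IsSignedCycle t h Cp Cm → ∑ f ∈ Cp, w f ≠ ∑ f ∈ Cm, w f

/-- The circuit signature `cir^w`: orient each cycle so that the positive arc has
the larger total `w`-weight. -/
def cirw [Fintype E] [DecidableEq E] [DecidableEq V] (t h : E → V) (w : E → ℝ) :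
    Set (Finset E × Finset E) :=
  {q | IsSignedCycle t h q.1 q.2 ∧ ∑ f ∈ q.2, w f < ∑ f ∈ q.1, w f}

/-- `tree(D,σ)`: spanning trees `T` such that every non-tree edge `f` lies in the
positive arc of the (σ-oriented) fundamental cycle of `f`, i.e. of the unique cycle
contained in `T ∪ {f}`. -/
def treeSet [Fintype V] [Fintype E] [DecidableEq V] [DecidableEq E] (t h : E → V)
    (σ : Set (Finset E × Finset E)) : Set (Finset E) :=
  {T | IsSpanningTree t h T ∧
    ∀ f ∉ T, ∀ Cp Cm : Finset E, (Cp, Cm) ∈ σ → Cp ∪ Cm ⊆ insert f T → f ∈ Cp}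

/-- `F` is a face of `Q`: the locus where some linear functional bounded above on `Q`
attains its maximum. -/
def IsFaceOf (Q F : Set (ι → ℝ)) : Prop :=
  ∃ (l : (ι → ℝ) →ₗ[ℝ] ℝ) (c : ℝ), (∀ y ∈ Q, l y ≤ c) ∧ F = {y ∈ Q | l y = c}

/-- `F` is a facet of `Q`: a face of codimension one. -/
def IsFacetOf (Q F : Set (ι → ℝ)) : Prop :=
  IsFaceOf Q F ∧ pdim F + 1 = pdim Q

end

section Contraction

variable {V E : Type*} [Fintype V] [Fintype E] [DecidableEq V] [DecidableEq E]

/-- The vertex identification map of the contraction `D/e` (for a non-loop `e`):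
the head of `e` is merged into the tail of `e`. -/
def cmap (t h : E → V) (e : E) : V → V := fun v => if v = h e then t e else v

/-- Tail map of the contracted digraph `D/e` (edge set `E - e`). -/
def contractTail (t h : E → V) (e : E) : {f : E // f ≠ e} → V :=
  fun f => cmap t h e (t f.1)

/-- Head map of the contracted digraph `D/e` (edge set `E - e`). -/
def contractHead (t h : E → V) (e : E) : {f : E // f ≠ e} → V :=
  fun f => cmap t h e (h f.1)

/-- The contracted signature `σ/e`: a signed cycle of `D/e` belongs to `σ/e` iff it
is the restriction to `E - e` of a signed cycle in `σ`. -/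
def contractSig (t h : E → V) (σ : Set (Finset E × Finset E)) (e : E) :
    Set (Finset {f : E // f ≠ e} × Finset {f : E // f ≠ e}) :=
  {q | IsSignedCycle (contractTail t h e) (contractHead t h e) q.1 q.2 ∧
    ∃ c ∈ σ, q.1 = c.1.subtype (· ≠ e) ∧ q.2 = c.2.subtype (· ≠ e)}

end Contraction

section Circulations

variable {V E : Type*} [DecidableEq V] {t h : E → V}

theorem xvec_apply_head {g : E} (hg : t g ≠ h g) : xvec t h g (h g) = 1 := by
  simp [xvec, Ne.symm hg]

theorem xvec_eq_zero_of_eq {g : E} (hg : t g = h g) : xvec t h g = 0 := by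
  funext v
  simp [xvec, hg]

theorem xvec_ne_zero {g : E} (hg : t g ≠ h g) : xvec t h g ≠ 0 := fun h0 => by
  simpa [h0] using xvec_apply_head hg

theorem xvec_add_smul_eq_zero_of_cmap_eq {e g : E} (he : t e ≠ h e)
    (hc : cmap t h g (t e) = cmap t h g (h e)) :
    ∃ ε : ℝ, (ε = 1 ∨ ε = -1) ∧ xvec t h e + ε • xvec t h g = 0 := by
  unfold cmap at hc
  split_ifs at hc with h1 h2 h2
  · exact absurd (h1.trans h2.symm) he
  · exact ⟨1, Or.inl rfl, by funext v; simp [xvec, h1, hc]⟩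
  · exact ⟨-1, Or.inr rfl, by funext v; simp [xvec, h2, hc]⟩
  · exact absurd hc he

variable [Fintype E]

theorem isCirculation_iff_linearCombination {φ : E → ℝ} :
    IsCirculation t h φ ↔ Fintype.linearCombination ℝ (xvec t h) φ = 0 := by
  rw [Fintype.linearCombination_apply, IsCirculation]

theorem IsCirculation.sub {φ ψ : E → ℝ} (hφ : IsCirculation t h φ) (hψ : IsCirculation t h ψ) :
    IsCirculation t h (φ - ψ) := by
  rw [isCirculation_iff_linearCombination] at *
  rw [map_sub, hφ, hψ, sub_zero]

theorem IsCirculation.smul {φ : E → ℝ} (c : ℝ) (hφ : IsCirculation t h φ) :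
    IsCirculation t h (c • φ) := by
  rw [isCirculation_iff_linearCombination] at *
  rw [map_smul, hφ, smul_zero]

theorem isCirculation_sum {ι : Type*} (s : Finset ι) (a : ι → ℝ) {Φ : ι → E → ℝ}
    (hΦ : ∀ i ∈ s, IsCirculation t h (Φ i)) : IsCirculation t h (∑ i ∈ s, a i • Φ i) := by
  simp_rw [isCirculation_iff_linearCombination, map_sum, map_smul] at hΦ ⊢
  exact Finset.sum_eq_zero fun i hi => by rw [hΦ i hi, smul_zero]

theorem isCirculation_single_add_single [DecidableEq E] {e g : E} {a b : ℝ} :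
    IsCirculation t h (Pi.single e a + Pi.single g b) ↔ a • xvec t h e + b • xvec t h g = 0 := by
  rw [isCirculation_iff_linearCombination, map_add, Fintype.linearCombination_apply_single,
    Fintype.linearCombination_apply_single]

end Circulations

section ContractEdge

variable {V E : Type*} [DecidableEq V] {t h : E → V} {g : E}

/-- Pushforward of vertex weights along `cmap t h g`: the weight at `h g` is moved to `t g`. -/
def mergeHead (t h : E → V) (g : E) : (V → ℝ) →ₗ[ℝ] V → ℝ :=
  LinearMap.id - (LinearMap.proj (h g)).smulRight (xvec t h g)

theorem mergeHead_apply (x : V → ℝ) : mergeHead t h g x = x - x (h g) • xvec t h g := rfl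

theorem mergeHead_xvec (f : {f : E // f ≠ g}) :
    mergeHead t h g (xvec t h f.1) = xvec (contractTail t h g) (contractHead t h g) f := by
  obtain ⟨f, hf⟩ := f
  funext v
  simp only [mergeHead_apply, xvec, contractTail, contractHead, cmap, Pi.sub_apply, Pi.smul_apply,
    smul_eq_mul]
  by_cases h1 : v = t g <;> by_cases h2 : v = h g <;>
    by_cases h3 : h f = h g <;> by_cases h4 : t f = h g <;>
      simp_all [eq_comm]

theorem mergeHead_xvec_self : mergeHead t h g (xvec t h g) = 0 := by
  by_cases hg : t g = h g
  · rw [xvec_eq_zero_of_eq hg, map_zero]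
  · rw [mergeHead_apply, xvec_apply_head hg, one_smul, sub_self]

variable [Fintype E] [DecidableEq E]

theorem IsCirculation.restrict {φ : E → ℝ} (hφ : IsCirculation t h φ) :
    IsCirculation (contractTail t h g) (contractHead t h g) (fun f => φ f.1) := by
  have h0 := congrArg (mergeHead t h g) hφ
  rw [map_sum, map_zero, Fintype.sum_eq_add_sum_subtype_ne _ g] at h0
  simp only [map_smul, mergeHead_xvec_self, smul_zero, zero_add, mergeHead_xvec] at h0
  exact h0

/-- The value at `g` is the one forced by conservation at `h g`. -/
def extendFlow (t h : E → V) (g : E) (φ : {f : E // f ≠ g} → ℝ) : E → ℝ :=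
  fun f => if hf : f = g then -(∑ f' : {f : E // f ≠ g}, φ f' • xvec t h f'.1) (h g)
    else φ ⟨f, hf⟩

@[simp]
theorem extendFlow_val (φ : {f : E // f ≠ g} → ℝ) (f : {f : E // f ≠ g}) :
    extendFlow t h g φ f.1 = φ f := by
  simp [extendFlow, f.2]

theorem mem_of_extendFlow_ne_zero {C : Finset E} (hg : g ∈ C) {φ : {f : E // f ≠ g} → ℝ}
    (hφC : ∀ f, φ f ≠ 0 → f ∈ C.subtype (· ≠ g)) {f : E} (hf : extendFlow t h g φ f ≠ 0) :
    f ∈ C := by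
  by_cases hfg : f = g
  · exact hfg ▸ hg
  · simpa using hφC ⟨f, hfg⟩ (by rwa [← extendFlow_val (t := t) (h := h) φ ⟨f, hfg⟩])

theorem IsCirculation.extendFlow {φ : {f : E // f ≠ g} → ℝ}
    (hφ : IsCirculation (contractTail t h g) (contractHead t h g) φ) :
    IsCirculation t h (extendFlow t h g φ) := by
  set y : V → ℝ := ∑ f : {f : E // f ≠ g}, φ f • xvec t h f.1 with hy
  have hmerge : mergeHead t h g y = 0 := by
    rw [hy, map_sum, ← hφ]
    simp only [map_smul, mergeHead_xvec]
  have hy_eq : y = y (h g) • xvec t h g := sub_eq_zero.1 hmerge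
  unfold IsCirculation
  rw [Fintype.sum_eq_add_sum_subtype_ne _ g]
  simp only [extendFlow_val, ← hy]
  rw [_root_.extendFlow, dif_pos rfl, ← hy, neg_smul, ← hy_eq, neg_add_cancel]

theorem IsCirculation.eq_zero_of_forall_ne (hg : t g ≠ h g) {φ : E → ℝ}
    (hφ : IsCirculation t h φ) (h0 : ∀ f, f ≠ g → φ f = 0) : φ = 0 := by
  have hφg : φ g • xvec t h g = 0 := by
    rw [← hφ, Fintype.sum_eq_single g fun f hf => by rw [h0 f hf, zero_smul]]
  have hg0 : φ g = 0 := (smul_eq_zero.1 hφg).resolve_right (xvec_ne_zero hg)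
  funext f
  by_cases hf : f = g
  · rw [hf, hg0, Pi.zero_apply]
  · exact h0 f hf

end ContractEdge

section SupportMinimal

variable {V E : Type*} [DecidableEq V] [Fintype E] [DecidableEq E] {t h : E → V}

/-- The support-minimality clause of `IsSignedCycle`, for the support `C = Cp ∪ Cm`. -/
def SupportMinimal (t h : E → V) (C : Finset E) : Prop :=
  ∀ φ : E → ℝ, IsCirculation t h φ → φ ≠ 0 → (∀ f, φ f ≠ 0 → f ∈ C) → ∀ f ∈ C, φ f ≠ 0

theorem SupportMinimal.eq_smul {C : Finset E} (hC : SupportMinimal t h C) {φ ψ : E → ℝ}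
    (hφ : IsCirculation t h φ) (hψ : IsCirculation t h ψ) (hφC : ∀ f, φ f ≠ 0 → f ∈ C)
    (hψC : ∀ f, ψ f ≠ 0 → f ∈ C) {g : E} (hg : g ∈ C) (hφg : φ g ≠ 0) :
    ψ = (ψ g / φ g) • φ := by
  rw [← sub_eq_zero]
  by_contra hne
  refine hC _ (hψ.sub (hφ.smul _)) hne (fun f hf => ?_) g hg ?_
  · by_contra hfC
    have hφf : φ f = 0 := by_contra fun h' => hfC (hφC f h')
    have hψf : ψ f = 0 := by_contra fun h' => hfC (hψC f h')
    simp [hφf, hψf] at hf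
  · simp [div_mul_cancel₀ _ hφg]

theorem SupportMinimal.contract {C : Finset E} (hC : SupportMinimal t h C) {g : E} (hg : g ∈ C) :
    SupportMinimal (contractTail t h g) (contractHead t h g) (C.subtype (· ≠ g)) := by
  intro φ hφ hφ0 hφC f hf
  have hext0 : extendFlow t h g φ ≠ 0 := fun h0 =>
    hφ0 (funext fun f => by simpa using congrFun h0 f.1)
  simpa using hC _ hφ.extendFlow hext0 (fun _ => mem_of_extendFlow_ne_zero hg hφC) f.1
    (by simpa using hf)

/-- Contracting the other edges of `C` one at a time, `e` eventually becomes parallel to some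
`g ∈ C`; the pair `{e, g}` carries a `±1` circulation, which extends back along the contractions. -/
theorem SupportMinimal.exists_circulation_eq_one {C : Finset E} (hC : SupportMinimal t h C)
    {e : E} (he : t e ≠ h e) {ψ : E → ℝ} (hψ : IsCirculation t h ψ)
    (hψC : ∀ f, ψ f ≠ 0 → f ∈ C) (hψe : ψ e ≠ 0) :
    ∃ θ : E → ℝ, IsCirculation t h θ ∧ (∀ f, θ f ≠ 0 → f ∈ C) ∧ θ e = 1 ∧
      ∃ g ∈ C, g ≠ e ∧ (θ g = 1 ∨ θ g = -1) := by
  obtain ⟨n, hn⟩ : ∃ n, C.card = n := ⟨_, rfl⟩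
  induction n generalizing E with
  | zero =>
    rw [Finset.card_eq_zero] at hn
    exact absurd (hψC e hψe) (hn ▸ Finset.notMem_empty e)
  | succ n ih =>
    by_cases hpar : ∃ g ∈ C, g ≠ e ∧ cmap t h g (t e) = cmap t h g (h e)
    · obtain ⟨g, hg, hge, hc⟩ := hpar
      obtain ⟨ε, hε, hx⟩ := xvec_add_smul_eq_zero_of_cmap_eq he hc
      refine ⟨Pi.single e 1 + Pi.single g ε, isCirculation_single_add_single.2 (by rwa [one_smul]),
        fun f hf => ?_, by simp [hge], g, hg, hge, by simpa [hge] using hε⟩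
      by_cases hfe : f = e
      · exact hfe ▸ hψC e hψe
      · by_cases hfg : f = g
        · exact hfg ▸ hg
        · simp [hfe, hfg] at hf
    push Not at hpar
    obtain ⟨g, hg, hge⟩ : ∃ g ∈ C, g ≠ e := by
      by_contra! hCe
      refine hψe (congrFun (hψ.eq_zero_of_forall_ne he fun f hfe => ?_) e)
      by_contra hf
      exact hfe (hCe f (hψC f hf))
    have hcard : (C.subtype (· ≠ g)).card = n := by
      rw [Finset.card_subtype, Finset.filter_ne', Finset.card_erase_of_mem hg, hn,
        Nat.add_sub_cancel]
    obtain ⟨θ, hθ, hθC, hθe, g', hg'C, hg'e, hθg'⟩ :=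
      ih (hC.contract hg) (e := ⟨e, hge.symm⟩) (hpar g hg hge) hψ.restrict
        (fun f hf => by simpa using hψC f hf) hψe hcard
    exact ⟨extendFlow t h g θ, hθ.extendFlow, fun _ => mem_of_extendFlow_ne_zero hg hθC,
      (extendFlow_val θ ⟨e, hge.symm⟩).trans hθe, g'.1, by simpa using hg'C,
      fun h' => hg'e (Subtype.ext h'), by simpa using hθg'⟩

theorem SupportMinimal.eq_one_or_eq_neg_one {C : Finset E} (hC : SupportMinimal t h C)
    {e : E} (he : t e ≠ h e) {ψ : E → ℝ} (hψ : IsCirculation t h ψ)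
    (hψC : ∀ f, ψ f ≠ 0 → f ∈ C) (hψe : ψ e ≠ 0) (hunit : ∀ f ∈ C, f ≠ e → ψ f = 1 ∨ ψ f = -1) :
    ψ e = 1 ∨ ψ e = -1 := by
  obtain ⟨θ, hθ, hθC, hθe, g, hg, hge, hθg⟩ := hC.exists_circulation_eq_one he hψ hψC hψe
  have hψθ := congrFun (hC.eq_smul hθ hψ hθC hψC hg (by rcases hθg with h' | h' <;> simp [h'])) e
  rw [Pi.smul_apply, hθe, smul_eq_mul, mul_one] at hψθ
  rw [hψθ]
  rcases hunit g hg hge with h1 | h1 <;> rcases hθg with h2 | h2 <;> norm_num [h1, h2]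

end SupportMinimal

section SignedCycles

variable {E : Type*} [DecidableEq E]

theorem chiVec_eq_zero_or_eq_one_or_eq_neg_one (A B : Finset E) (f : E) :
    chiVec A B f = 0 ∨ chiVec A B f = 1 ∨ chiVec A B f = -1 := by
  unfold chiVec
  split_ifs <;> norm_num

theorem chiVec_eq_one_iff {A B : Finset E} (hAB : Disjoint A B) {f : E} :
    chiVec A B f = 1 ↔ f ∈ A := by
  by_cases hA : f ∈ A
  · simp [chiVec, hA, Finset.disjoint_left.1 hAB hA]
  · by_cases hB : f ∈ B <;> norm_num [chiVec, hA, hB]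

theorem chiVec_eq_neg_one_iff {A B : Finset E} (hAB : Disjoint A B) {f : E} :
    chiVec A B f = -1 ↔ f ∈ B := by
  by_cases hB : f ∈ B
  · simp [chiVec, hB, Finset.disjoint_right.1 hAB hB]
  · by_cases hA : f ∈ A <;> norm_num [chiVec, hA, hB]

theorem chiVec_ne_zero_iff {A B : Finset E} (hAB : Disjoint A B) {f : E} :
    chiVec A B f ≠ 0 ↔ f ∈ A ∪ B := by
  rw [Finset.mem_union, ← chiVec_eq_one_iff hAB, ← chiVec_eq_neg_one_iff hAB]
  rcases chiVec_eq_zero_or_eq_one_or_eq_neg_one A B f with h0 | h0 | h0 <;> norm_num [h0]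

theorem chiVec_swap (A B : Finset E) : chiVec B A = -chiVec A B := by
  funext f
  simp only [chiVec, Pi.neg_apply, neg_sub]

theorem chiVec_subtype (p : E → Prop) [DecidablePred p] (A B : Finset E) (f : Subtype p) :
    chiVec (A.subtype p) (B.subtype p) f = chiVec A B f.1 := by
  simp [chiVec]

theorem chiVec_injective {A B A' B' : Finset E} (hAB : Disjoint A B) (hAB' : Disjoint A' B')
    (heq : chiVec A B = chiVec A' B') : A = A' ∧ B = B' := by
  constructor <;> ext f
  · rw [← chiVec_eq_one_iff hAB, ← chiVec_eq_one_iff hAB', heq]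
  · rw [← chiVec_eq_neg_one_iff hAB, ← chiVec_eq_neg_one_iff hAB', heq]

theorem chiVec_filter_eq [Fintype E] {ψ : E → ℝ} (hψ : ∀ f, ψ f = 0 ∨ ψ f = 1 ∨ ψ f = -1) :
    chiVec (univ.filter (ψ · = 1)) (univ.filter (ψ · = -1)) = ψ := by
  funext f
  rcases hψ f with h0 | h0 | h0 <;> norm_num [chiVec, h0]

variable {V : Type*} [DecidableEq V] [Fintype E] {t h : E → V}

theorem IsSignedCycle.swap {Cp Cm : Finset E} (hC : IsSignedCycle t h Cp Cm) :
    IsSignedCycle t h Cm Cp := by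
  obtain ⟨hd, hne, hcirc, hmin⟩ := hC
  refine ⟨hd.symm, Finset.union_comm Cp Cm ▸ hne, ?_, Finset.union_comm Cp Cm ▸ hmin⟩
  rw [chiVec_swap, ← neg_one_smul ℝ (chiVec Cp Cm)]
  exact hcirc.smul (-1)

theorem isSignedCycle_filter {ψ : E → ℝ} (hψ : IsCirculation t h ψ) (hψ0 : ψ ≠ 0)
    (hvals : ∀ f, ψ f = 0 ∨ ψ f = 1 ∨ ψ f = -1)
    (hmin : SupportMinimal t h (univ.filter (ψ · ≠ 0))) :
    IsSignedCycle t h (univ.filter (ψ · = 1)) (univ.filter (ψ · = -1)) := by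
  have hunion : univ.filter (ψ · = 1) ∪ univ.filter (ψ · = -1) = univ.filter (ψ · ≠ 0) := by
    ext f
    rcases hvals f with h0 | h0 | h0 <;> norm_num [h0]
  refine ⟨Finset.disjoint_filter.2 fun f _ h1 h2 => by norm_num [h1] at h2, ?_, ?_, hunion ▸ hmin⟩
  · obtain ⟨f, hf⟩ := Function.ne_iff.1 hψ0
    exact ⟨f, hunion ▸ by simpa using hf⟩
  · rwa [chiVec_filter_eq hvals]

end SignedCycles

section Lift

variable {V E : Type*} [DecidableEq V] [Fintype E] [DecidableEq E] {t h : E → V} {e : E}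

/-- Every circulation of `D` inside the support of `ψ` restricts to a multiple of the restriction
of `ψ`, hence is a multiple of `ψ`. -/
theorem supportMinimal_of_contract (he : t e ≠ h e) {ψ : E → ℝ} (hψ : IsCirculation t h ψ)
    {C : Finset {f : E // f ≠ e}} (hC : SupportMinimal (contractTail t h e) (contractHead t h e) C)
    (hψC : ∀ f : {f : E // f ≠ e}, ψ f.1 ≠ 0 ↔ f ∈ C) (hCne : C.Nonempty) :
    SupportMinimal t h (univ.filter (ψ · ≠ 0)) := by
  intro φ hφ hφ0 hφC f hf
  obtain ⟨s, hs⟩ := hCne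
  have hφ'0 : (fun f : {f : E // f ≠ e} => φ f.1) ≠ 0 := fun h0 =>
    hφ0 (hφ.eq_zero_of_forall_ne he fun f hf => congrFun h0 ⟨f, hf⟩)
  have hφ'C : ∀ f : {f : E // f ≠ e}, φ f.1 ≠ 0 → f ∈ C := fun f hf =>
    (hψC f).1 (by simpa using hφC _ hf)
  have hψ' := hC.eq_smul hφ.restrict hψ.restrict hφ'C (fun f hf => (hψC f).1 hf) hs
    (hC _ hφ.restrict hφ'0 hφ'C s hs)
  have hψφ : ψ - (ψ s.1 / φ s.1) • φ = 0 :=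
    (hψ.sub (hφ.smul _)).eq_zero_of_forall_ne he fun f hf => by
      simpa [sub_eq_zero] using congrFun hψ' ⟨f, hf⟩
  have hψf := congrFun (sub_eq_zero.1 hψφ) f
  rw [Pi.smul_apply, smul_eq_mul] at hψf
  exact right_ne_zero_of_mul (hψf ▸ (Finset.mem_filter.1 hf).2)

theorem IsSignedCycle.exists_lift (he : t e ≠ h e) {Cp Cm : Finset {f : E // f ≠ e}}
    (hC : IsSignedCycle (contractTail t h e) (contractHead t h e) Cp Cm) :
    ∃ Dp Dm : Finset E, IsSignedCycle t h Dp Dm ∧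
      Cp = Dp.subtype (· ≠ e) ∧ Cm = Dm.subtype (· ≠ e) := by
  obtain ⟨hd, hne, hcirc, hmin⟩ := hC
  set ψ := extendFlow t h e (chiVec Cp Cm)
  have hψ : IsCirculation t h ψ := hcirc.extendFlow
  have hψC : ∀ f : {f : E // f ≠ e}, ψ f.1 ≠ 0 ↔ f ∈ Cp ∪ Cm := by
    simp [ψ, chiVec_ne_zero_iff hd]
  have hmin' := supportMinimal_of_contract he hψ hmin hψC hne
  have hvals : ∀ f, ψ f = 0 ∨ ψ f = 1 ∨ ψ f = -1 := by
    intro f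
    by_cases hfe : f = e
    · subst hfe
      by_cases hψf : ψ f = 0
      · exact Or.inl hψf
      refine Or.inr (hmin'.eq_one_or_eq_neg_one he hψ (fun f hf => by simpa using hf) hψf ?_)
      intro g hg hgf
      have hg' := extendFlow_val (t := t) (h := h) (chiVec Cp Cm) ⟨g, hgf⟩
      rcases chiVec_eq_zero_or_eq_one_or_eq_neg_one Cp Cm ⟨g, hgf⟩ with h0 | h0 | h0
      · simp [ψ, hg', h0] at hg
      · exact Or.inl (hg'.trans h0)
      · exact Or.inr (hg'.trans h0)
    · simpa [ψ, extendFlow, hfe] using chiVec_eq_zero_or_eq_one_or_eq_neg_one Cp Cm ⟨f, hfe⟩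
  have hψ0 : ψ ≠ 0 := fun h0 => by
    obtain ⟨s, hs⟩ := hne
    exact (hψC s).2 hs (congrFun h0 s.1)
  refine ⟨_, _, isSignedCycle_filter hψ hψ0 hvals hmin', ?_, ?_⟩ <;> ext f
  · simp [ψ, chiVec_eq_one_iff hd]
  · simp [ψ, chiVec_eq_neg_one_iff hd]

theorem IsSignedCycle.eq_of_subtype_eq (he : t e ≠ h e) {Dp Dm Dp' Dm' : Finset E}
    (hD : IsSignedCycle t h Dp Dm) (hD' : IsSignedCycle t h Dp' Dm')
    (hp : Dp.subtype (· ≠ e) = Dp'.subtype (· ≠ e))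
    (hm : Dm.subtype (· ≠ e) = Dm'.subtype (· ≠ e)) : Dp = Dp' ∧ Dm = Dm' := by
  refine chiVec_injective hD.1 hD'.1 (sub_eq_zero.1 ?_)
  refine (hD.2.2.1.sub hD'.2.2.1).eq_zero_of_forall_ne he fun f hf => ?_
  have hsub := chiVec_subtype (· ≠ e) Dp Dm ⟨f, hf⟩
  rw [hp, hm, chiVec_subtype] at hsub
  rw [Pi.sub_apply, ← hsub, sub_self]

theorem mem_contractSig_iff {σ : Set (Finset E × Finset E)}
    (hσ : ∀ q ∈ σ, IsSignedCycle t h q.1 q.2) (he : t e ≠ h e) {Cp Cm : Finset {f : E // f ≠ e}}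
    (hC : IsSignedCycle (contractTail t h e) (contractHead t h e) Cp Cm) {Dp Dm : Finset E}
    (hD : IsSignedCycle t h Dp Dm) (hp : Cp = Dp.subtype (· ≠ e)) (hm : Cm = Dm.subtype (· ≠ e)) :
    (Cp, Cm) ∈ contractSig t h σ e ↔ (Dp, Dm) ∈ σ := by
  refine ⟨fun ⟨_, c, hc, hc1, hc2⟩ => ?_, fun hDσ => ⟨hC, _, hDσ, hp, hm⟩⟩
  obtain ⟨h1, h2⟩ := (hσ c hc).eq_of_subtype_eq he hD (hc1.symm.trans hp) (hc2.symm.trans hm)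
  rwa [← h1, ← h2]

theorem isCircuitSignature_contractSig {σ : Set (Finset E × Finset E)}
    (hσ : IsCircuitSignature t h σ) (he : t e ≠ h e) :
    IsCircuitSignature (contractTail t h e) (contractHead t h e) (contractSig t h σ e) := by
  refine ⟨fun q hq => hq.1, fun Cp Cm hC => ?_⟩
  obtain ⟨Dp, Dm, hD, hp, hm⟩ := hC.exists_lift he
  rw [mem_contractSig_iff hσ.1 he hC hD hp hm, mem_contractSig_iff hσ.1 he hC.swap hD.swap hm hp]
  exact hσ.2 Dp Dm hD

theorem isAcyclicSig_contractSig {σ : Set (Finset E × Finset E)}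
    (hσ : ∀ q ∈ σ, IsSignedCycle t h q.1 q.2) (hac : IsAcyclicSig σ) (he : t e ≠ h e) :
    IsAcyclicSig (contractSig t h σ e) := by
  intro s a hs ha ⟨q₀, hq₀, ha₀⟩ hsum
  let res : Finset E × Finset E → Finset {f : E // f ≠ e} × Finset {f : E // f ≠ e} :=
    fun c => (c.1.subtype (· ≠ e), c.2.subtype (· ≠ e))
  have hlift : ∀ q ∈ s, ∃ c ∈ σ, res c = q := fun q hq => by
    obtain ⟨-, c, hc, hc1, hc2⟩ := hs hq
    exact ⟨c, hc, Prod.ext hc1.symm hc2.symm⟩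
  choose! ℓ hℓσ hℓ using hlift
  have hinj : Set.InjOn ℓ s := fun q hq q' hq' hqq' => by rw [← hℓ q hq, ← hℓ q' hq', hqq']
  have hΨ : ∑ q ∈ s, a q • chiVec (ℓ q).1 (ℓ q).2 = 0 := by
    refine (isCirculation_sum s a fun q hq => (hσ _ (hℓσ q hq)).2.2.1).eq_zero_of_forall_ne he
      fun f hf => ?_
    have hsum_f : ∑ q ∈ s, a q * chiVec q.1 q.2 ⟨f, hf⟩ = 0 := by
      simpa using congrFun hsum ⟨f, hf⟩
    simp only [Finset.sum_apply, Pi.smul_apply, smul_eq_mul]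
    rw [← hsum_f]
    refine Finset.sum_congr rfl fun q hq => ?_
    conv_rhs => arg 2; rw [← hℓ q hq, chiVec_subtype]
  refine hac (s.image ℓ) (a ∘ res) (by rw [Finset.coe_image]; exact Set.image_subset_iff.2 hℓσ)
    (fun _ => ha _) ⟨ℓ q₀, Finset.mem_image_of_mem ℓ hq₀, by simpa [hℓ q₀ hq₀] using ha₀⟩ ?_
  rw [Finset.sum_image hinj, ← hΨ]
  exact Finset.sum_congr rfl fun q hq => by rw [Function.comp_apply, hℓ q hq]

end Lift

section Contraction

variable {V E : Type*} [Fintype V] [Fintype E] [DecidableEq V] [DecidableEq E]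

/-- if `σ` is an acyclic circuit signature of `D` and `e` is a non-loop
edge, then `σ/e` is an acyclic circuit signature of `D/e`. -/
theorem stmt6 (t h : E → V) (σ : Set (Finset E × Finset E))
    (hσ : IsCircuitSignature t h σ) (hac : IsAcyclicSig σ)
    (e : E) (he : t e ≠ h e) :
    IsCircuitSignature (contractTail t h e) (contractHead t h e) (contractSig t h σ e) ∧
    IsAcyclicSig (contractSig t h σ e) :=
  ⟨isCircuitSignature_contractSig hσ he, isAcyclicSig_contractSig hσ.1 hac he⟩

end Contraction
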